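/- Let g > 0, h_l > 0, u_l > 0 and [b] > 0 be real numbers. Then: (i) u₀ is strictly decreasing on (0, ∞); (ii) for every h > h_l, the derivative of h ↦ h·u₀(h) satisfies (h·u₀(h))' < c₁(h) and, for h > h̃, c₁(h) < 0, so h ↦ h·u₀(h) is strictly decreasing on (h̃, ∞); (iii) consequently the function r(h) := ((h·u₀(h))²/g)^(1/3) − h + [b] is strictly decreasing on [h̃, h̲], where h̲ is the largest real root of f. -/

import Mathlib

/-- Velocity along the 1-shock curve from `(h_l, u_l)` at depth `h`. -/
noncomputable def uZero (g hl ul h : ℝ) : ℝ :=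
  ul - Real.sqrt ((g / 2) * (1 / h + 1 / hl)) * (h - hl)

/-- Speed of the 1-shock from `(h_l, u_l)` to depth `h`. -/
noncomputable def cOne (g hl ul h : ℝ) : ℝ :=
  ul - Real.sqrt ((g / 2) * (1 / h + 1 / hl)) * h

/-- The cubic `f(h) = h³ − h_l h² − (h_l² + (2/g)u_l²h_l)h + h_l³`. -/
noncomputable def fCubic (g hl ul h : ℝ) : ℝ :=
  h ^ 3 - hl * h ^ 2 - (hl ^ 2 + (2 / g) * ul ^ 2 * hl) * h + hl ^ 3

/-- `h̃ = h_l` if `z ≤ 1` and `h̃ = (h_l/2)(√(1+8z) − 1)` if `z > 1`,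
where `z = u_l²/(gh_l)`. -/
noncomputable def hTilde (g hl ul : ℝ) : ℝ :=
  if ul ^ 2 / (g * hl) ≤ 1 then hl
  else (hl / 2) * (Real.sqrt (1 + 8 * (ul ^ 2 / (g * hl))) - 1)

/-! Write `u₀(h) = u_l − s(h)(h − h_l)` with `s(h)² = g(h + h_l)/(2 h h_l)`. Differentiating,
`u₀' = g(h − h_l)/(4 s h²) − s < 0` and `(h u₀)' = c₁ − (h − h_l)(s − g/(4 s h)) < c₁` for
`h > h_l`. Next, `c₁(h) < 0` as soon as `2 u_l² h_l < g h (h + h_l)`; the right side is increasing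
in `h` and `h̃` is chosen so that the inequality holds weakly at `h̃` (with equality when `z > 1`).
Finally `u₀(h) ≥ 0` exactly when `f(h) ≤ 0`, and `f`, being convex on `[h_l, ∞)` with
`f(h_l) < 0`, is nonpositive between `h_l` and any root. Hence `h u₀ ≥ 0` on `[h̃, h̲]`, the
cube-root term of `r` is antitone there, and `−h` makes `r` strictly decreasing. -/

open Set

noncomputable def shockFactor (g hl h : ℝ) : ℝ :=
  √((g / 2) * (1 / h + 1 / hl))

lemma hl_le_hTilde (g ul : ℝ) {hl : ℝ} (hhl : 0 < hl) : hl ≤ hTilde g hl ul := by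
  unfold hTilde
  split_ifs with hz
  · exact le_rfl
  · have h3 : 3 < √(1 + 8 * (ul ^ 2 / (g * hl))) := by
      rw [Real.lt_sqrt (by norm_num)]
      linarith
    nlinarith

section ShockCurve

variable {g hl : ℝ}

lemma uZero_def (ul h : ℝ) : uZero g hl ul h = ul - shockFactor g hl h * (h - hl) := rfl

lemma cOne_def (ul h : ℝ) : cOne g hl ul h = ul - shockFactor g hl h * h := rfl

lemma shockFactor_pos (hg : 0 < g) (hhl : 0 < hl) {h : ℝ} (hh : 0 < h) :
    0 < shockFactor g hl h :=
  Real.sqrt_pos.2 (by positivity)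

lemma sq_shockFactor (hg : 0 < g) (hhl : 0 < hl) {h : ℝ} (hh : 0 < h) :
    shockFactor g hl h ^ 2 = g * (h + hl) / (2 * h * hl) := by
  rw [shockFactor, Real.sq_sqrt (by positivity)]
  field_simp
  ring

lemma hasDerivAt_shockFactor (hg : 0 < g) (hhl : 0 < hl) {h : ℝ} (hh : 0 < h) :
    HasDerivAt (shockFactor g hl) (-g / (4 * shockFactor g hl h * h ^ 2)) h := by
  have hA : HasDerivAt (fun y => (g / 2) * (1 / y + 1 / hl)) (g / 2 * -(h ^ 2)⁻¹) h := by
    simpa only [one_div] using ((hasDerivAt_inv hh.ne').add_const hl⁻¹).const_mul (g / 2)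
  refine (hA.sqrt (by positivity)).congr_deriv ?_
  rw [← shockFactor]
  field_simp
  norm_num

lemma hasDerivAt_uZero (ul : ℝ) (hg : 0 < g) (hhl : 0 < hl) {h : ℝ} (hh : 0 < h) :
    HasDerivAt (uZero g hl ul)
      (g * (h - hl) / (4 * shockFactor g hl h * h ^ 2) - shockFactor g hl h) h := by
  refine (((hasDerivAt_shockFactor hg hhl hh).mul ((hasDerivAt_id h).sub_const hl)).const_sub
    ul).congr_deriv ?_
  simp only [id]
  ring

lemma strictAntiOn_uZero (ul : ℝ) (hg : 0 < g) (hhl : 0 < hl) :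
    StrictAntiOn (uZero g hl ul) (Ioi 0) := by
  refine strictAntiOn_of_deriv_neg (convex_Ioi 0)
    (fun h hh => (hasDerivAt_uZero ul hg hhl hh).continuousAt.continuousWithinAt) fun h hh => ?_
  rw [interior_Ioi, mem_Ioi] at hh
  have hs := shockFactor_pos hg hhl hh
  rw [(hasDerivAt_uZero ul hg hhl hh).deriv, sub_neg, div_lt_iff₀ (by positivity),
    show shockFactor g hl h * (4 * shockFactor g hl h * h ^ 2)
      = 4 * h ^ 2 * shockFactor g hl h ^ 2 by ring, sq_shockFactor hg hhl hh]
  field_simp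
  nlinarith [mul_pos (mul_pos hg hh) hh, mul_pos (mul_pos hg hh) hhl]

lemma hasDerivAt_mul_uZero (ul : ℝ) (hg : 0 < g) (hhl : 0 < hl) {h : ℝ} (hh : 0 < h) :
    HasDerivAt (fun x => x * uZero g hl ul x)
      (cOne g hl ul h - (h - hl) * (shockFactor g hl h - g / (4 * shockFactor g hl h * h))) h := by
  have hs := shockFactor_pos hg hhl hh
  refine ((hasDerivAt_id h).mul (hasDerivAt_uZero ul hg hhl hh)).congr_deriv ?_
  rw [uZero_def, cOne_def, id]
  field_simp
  ring

lemma deriv_mul_uZero_lt_cOne (ul : ℝ) (hg : 0 < g) (hhl : 0 < hl) {h : ℝ} (hh : hl < h) :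
    deriv (fun x => x * uZero g hl ul x) h < cOne g hl ul h := by
  have hh0 : 0 < h := hhl.trans hh
  have hs := shockFactor_pos hg hhl hh0
  rw [(hasDerivAt_mul_uZero ul hg hhl hh0).deriv, sub_lt_self_iff]
  refine mul_pos (sub_pos.2 hh) (sub_pos.2 ?_)
  rw [div_lt_iff₀ (by positivity), show shockFactor g hl h * (4 * shockFactor g hl h * h)
    = 4 * h * shockFactor g hl h ^ 2 by ring, sq_shockFactor hg hhl hh0]
  field_simp
  nlinarith [mul_pos hg hh0, mul_pos hg hhl]

lemma cOne_neg_of_lt (ul : ℝ) (hg : 0 < g) (hhl : 0 < hl) {h : ℝ} (hh : 0 < h)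
    (hq : 2 * ul ^ 2 * hl < g * h * (h + hl)) : cOne g hl ul h < 0 := by
  have hs := shockFactor_pos hg hhl hh
  rw [cOne_def, sub_neg]
  refine (le_abs_self ul).trans_lt (abs_lt_of_sq_lt_sq ?_ (by positivity))
  rw [mul_pow, sq_shockFactor hg hhl hh, div_mul_eq_mul_div, lt_div_iff₀ (by positivity)]
  nlinarith [mul_lt_mul_of_pos_right hq hh]

lemma two_mul_sq_mul_le_hTilde (ul : ℝ) (hg : 0 < g) (hhl : 0 < hl) :
    2 * ul ^ 2 * hl ≤ g * hTilde g hl ul * (hTilde g hl ul + hl) := by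
  unfold hTilde
  split_ifs with hz
  · rw [div_le_one (by positivity)] at hz
    nlinarith
  · have ht := Real.sq_sqrt (show 0 ≤ 1 + 8 * (ul ^ 2 / (g * hl)) by positivity)
    have hz' : g * hl * (ul ^ 2 / (g * hl)) = ul ^ 2 := by field_simp
    apply le_of_eq
    linear_combination (-(g * hl ^ 2 / 4)) * ht + (-2 * hl) * hz'

lemma cOne_neg_of_hTilde_lt (ul : ℝ) (hg : 0 < g) (hhl : 0 < hl) {h : ℝ}
    (hh : hTilde g hl ul < h) : cOne g hl ul h < 0 := by
  have hT := hl_le_hTilde g ul hhl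
  refine cOne_neg_of_lt ul hg hhl (by linarith) ?_
  nlinarith [two_mul_sq_mul_le_hTilde ul hg hhl,
    mul_pos (mul_pos hg (sub_pos.2 hh)) (show 0 < h + hTilde g hl ul + hl by linarith)]

lemma strictAntiOn_mul_uZero (ul : ℝ) (hg : 0 < g) (hhl : 0 < hl) :
    StrictAntiOn (fun x => x * uZero g hl ul x) (Ici (hTilde g hl ul)) := by
  have hT := hl_le_hTilde g ul hhl
  refine strictAntiOn_of_deriv_neg (convex_Ici _) (fun h hh => ?_) fun h hh => ?_
  · have hh0 : 0 < h := hhl.trans_le (hT.trans hh)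
    exact (hasDerivAt_mul_uZero ul hg hhl hh0).continuousAt.continuousWithinAt
  · rw [interior_Ici] at hh
    exact (deriv_mul_uZero_lt_cOne ul hg hhl (hT.trans_lt hh)).trans
      (cOne_neg_of_hTilde_lt ul hg hhl hh)

end ShockCurve

section Cubic

variable {g hl ul : ℝ}

lemma fCubic_hl_neg (hg : 0 < g) (hhl : hl ≠ 0) (hul : ul ≠ 0) : fCubic g hl ul hl < 0 := by
  have e : fCubic g hl ul hl = -(2 / g * ul ^ 2 * hl ^ 2) := by unfold fCubic; ring
  rw [e, neg_lt_zero]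
  positivity

/-- `f` minus its chord over `[h_l, r]` is the monic cubic with roots `h_l`, `r` and `-r`. -/
lemma fCubic_nonpos_of_mem_Icc (hg : 0 < g) (hhl : 0 < hl) (hul : ul ≠ 0) {r x : ℝ}
    (hr : fCubic g hl ul r = 0) (hx : x ∈ Icc hl r) : fCubic g hl ul x ≤ 0 := by
  obtain ⟨hlx, hxr⟩ := hx
  have secant : (r - hl) * fCubic g hl ul x = (r - x) * fCubic g hl ul hl
      + (x - hl) * fCubic g hl ul r + (r - hl) * (x - hl) * (x - r) * (x + r) := by
    unfold fCubic; ring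
  have hf := fCubic_hl_neg hg hhl.ne' hul
  rcases hlx.eq_or_lt with rfl | hlx
  · exact hf.le
  refine nonpos_of_mul_nonpos_right ?_ (sub_pos.2 (hlx.trans_le hxr))
  rw [secant, hr, mul_zero, add_zero]
  nlinarith [mul_nonneg (mul_nonneg (sub_nonneg.2 hlx.le) (sub_nonneg.2 hxr))
    (show 0 ≤ x + r by linarith)]

/-- `2 h h_l (u_l² − (s(h)(h − h_l))²) = −g f(h)`: the sign of `u₀` is read off `f`. -/
lemma uZero_nonneg_of_fCubic_nonpos (hg : 0 < g) (hhl : 0 < hl) (hul : 0 ≤ ul) {h : ℝ}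
    (hh : 0 < h) (hf : fCubic g hl ul h ≤ 0) : 0 ≤ uZero g hl ul h := by
  rw [uZero_def, sub_nonneg]
  refine (le_abs_self _).trans (abs_le_of_sq_le_sq ?_ hul)
  rw [mul_pow, sq_shockFactor hg hhl hh, div_mul_eq_mul_div, div_le_iff₀ (by positivity)]
  have key : g * fCubic g hl ul h = g * (h + hl) * (h - hl) ^ 2 - 2 * ul ^ 2 * hl * h := by
    unfold fCubic
    field_simp
    ring
  nlinarith [mul_nonpos_of_nonneg_of_nonpos hg.le hf]

end Cubic

lemma strictAntiOn_rpow_sq_div_sub_add {g : ℝ} {q : ℝ → ℝ} {s : Set ℝ} (hg : 0 ≤ g)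
    (hq : AntitoneOn q s) (hq0 : ∀ x ∈ s, 0 ≤ q x) (b : ℝ) :
    StrictAntiOn (fun h => ((q h) ^ 2 / g) ^ ((1 : ℝ) / 3) - h + b) s := by
  intro x hx y hy hxy
  have hcbrt : ((q y) ^ 2 / g) ^ ((1 : ℝ) / 3) ≤ ((q x) ^ 2 / g) ^ ((1 : ℝ) / 3) := by
    have := hq0 y hy
    have := hq hx hy hxy.le
    gcongr
  simp only
  linarith

theorem stmt_19_general (g hl ul b hunder : ℝ) (hg : 0 < g) (hhl : 0 < hl) (hul : 0 < ul)
    (hroot : fCubic g hl ul hunder = 0) :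
    StrictAntiOn (uZero g hl ul) (Set.Ioi 0) ∧
    (∀ h : ℝ, hl < h → deriv (fun x : ℝ => x * uZero g hl ul x) h < cOne g hl ul h) ∧
    (∀ h : ℝ, hTilde g hl ul < h → cOne g hl ul h < 0) ∧
    StrictAntiOn (fun h : ℝ => h * uZero g hl ul h) (Set.Ioi (hTilde g hl ul)) ∧
    StrictAntiOn
      (fun h : ℝ => ((h * uZero g hl ul h) ^ 2 / g) ^ ((1 : ℝ) / 3) - h + b)
      (Set.Icc (hTilde g hl ul) hunder) := by
  have hT := hl_le_hTilde g ul hhl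
  have hanti := strictAntiOn_mul_uZero ul hg hhl
  refine ⟨strictAntiOn_uZero ul hg hhl, fun h => deriv_mul_uZero_lt_cOne ul hg hhl,
    fun h => cOne_neg_of_hTilde_lt ul hg hhl, hanti.mono Ioi_subset_Ici_self,
    strictAntiOn_rpow_sq_div_sub_add hg.le (hanti.antitoneOn.mono Icc_subset_Ici_self) ?_ b⟩
  rintro x ⟨hTx, hxr⟩
  have hlx : hl ≤ x := hT.trans hTx
  exact mul_nonneg (hhl.trans_le hlx).le (uZero_nonneg_of_fCubic_nonpos hg hhl hul.le
    (hhl.trans_le hlx) (fCubic_nonpos_of_mem_Icc hg hhl hul.ne' hroot ⟨hlx, hxr⟩))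

/-- (i) `u₀` is strictly decreasing on `(0,∞)`; (ii) for `h > h_l` the derivative
of `h ↦ hu₀(h)` is `< c₁(h)` and, for `h > h̃`, `c₁(h) < 0`, so `h ↦ hu₀(h)` is
strictly decreasing on `(h̃,∞)`; (iii) consequently
`r(h) = ((hu₀(h))²/g)^(1/3) − h + [b]` is strictly decreasing on `[h̃, h̲]`. -/
theorem stmt_19 (g hl ul b hunder : ℝ) (hg : 0 < g) (hhl : 0 < hl) (hul : 0 < ul)
    (hb : 0 < b)
    (hroot : fCubic g hl ul hunder = 0)
    (hmax : ∀ x : ℝ, fCubic g hl ul x = 0 → x ≤ hunder) :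
    StrictAntiOn (uZero g hl ul) (Set.Ioi 0) ∧
    (∀ h : ℝ, hl < h → deriv (fun x : ℝ => x * uZero g hl ul x) h < cOne g hl ul h) ∧
    (∀ h : ℝ, hTilde g hl ul < h → cOne g hl ul h < 0) ∧
    StrictAntiOn (fun h : ℝ => h * uZero g hl ul h) (Set.Ioi (hTilde g hl ul)) ∧
    StrictAntiOn
      (fun h : ℝ => ((h * uZero g hl ul h) ^ 2 / g) ^ ((1 : ℝ) / 3) - h + b)
      (Set.Icc (hTilde g hl ul) hunder) :=
  stmt_19_general g hl ul b hunder hg hhl hul hroot
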